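/- Let X ⊆ ℝ^9 be the set of the 9 vectors having eight coordinates equal to 1/3 and one coordinate equal to −2/3. Then J̃(9,2) ∪ X is a two-distance set of 45 points in H(9,2) whose two distances are √2 and 2; moreover, for every y ∈ H(9,2), if J̃(9,2) ∪ {y} is a two-distance set then y ∈ J̃(9,2) ∪ X. Consequently, J̃(9,2) ∪ X is the unique maximal two-distance set in H(9,2) containing J̃(9,2). -/

import Mathlib

noncomputable section

/-- The set of distances between distinct points of `S`. -/
def distSet {n : ℕ} (S : Set (EuclideanSpace ℝ (Fin n))) : Set ℝ :=
  {d | ∃ x ∈ S, ∃ y ∈ S, x ≠ y ∧ d = dist x y}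

/-- `S` is an `s`-distance set: exactly `s` distances occur between distinct points. -/
def IsSDistanceSet {n : ℕ} (s : ℕ) (S : Set (EuclideanSpace ℝ (Fin n))) : Prop :=
  (distSet S).Finite ∧ (distSet S).ncard = s

/-- The representation `J̃(n,m)` of the Johnson graph `J(n,m)`: vectors with exactly `m`
coordinates equal to `1` and the rest equal to `0`. -/
def JohnsonRep (n m : ℕ) : Set (EuclideanSpace ℝ (Fin n)) :=
  {x | (∀ i, x i = 0 ∨ x i = 1) ∧ {i : Fin n | x i = 1}.ncard = m}

/-- The hyperplane `H(n,m) = {x : ∑ x_i = m}`. -/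
def Hyp (n m : ℕ) : Set (EuclideanSpace ℝ (Fin n)) :=
  {x | ∑ i, x i = (m : ℝ)}

/-- The set `X = ((1/3)^8, -2/3)^P ⊆ ℝ⁹`: eight coordinates `1/3`, one coordinate `-2/3`. -/
def X92 : Set (EuclideanSpace ℝ (Fin 9)) :=
  {y | {i : Fin 9 | y i = 1/3}.ncard = 8 ∧ {i : Fin 9 | y i = -2/3}.ncard = 1}

/-!
The squared distance from the indicator vector of a pair `{i, j}` to `y` is
`2 - 2 (y i + y j) + ‖y‖²`. So if `y ∉ J̃(9,2)` lies at distance `√2` or `2` from every point of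
`J̃(9,2)`, all pair sums `y i + y j` lie in `{‖y‖²/2, ‖y‖²/2 - 1}`. Three different coordinate
values would give three different pair sums, and so would two values each taken twice; hence `y`
is constant off one coordinate, and `∑ y i = 2` together with the two admissible pair sums forces
`y ∈ X`. Conversely all distances within `J̃(9,2) ∪ X` are `√2` or `2`, so every two-distance set
between `J̃(9,2)` and `H(9,2)` is contained in `J̃(9,2) ∪ X`, which is itself one.
-/

open Finset

lemma sum_eq_add_mul_of_forall_ne {ι : Type*} [Fintype ι] [DecidableEq ι] (f : ι → ℝ) {q : ι}
    {u : ℝ} (hf : ∀ i ≠ q, f i = u) : ∑ i, f i = f q + (Fintype.card ι - 1) * u := by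
  rw [Fintype.sum_eq_add_sum_compl q, sum_congr rfl fun i hi => hf i (by simpa using hi),
    sum_const, card_compl, card_singleton, nsmul_eq_mul,
    Nat.cast_sub (Fintype.card_pos_iff.mpr ⟨q⟩), Nat.cast_one]

lemma eq_or_eq_or_eq_of_mem_pair {a b p q r : ℝ} (hp : p ∈ ({a, b} : Set ℝ))
    (hq : q ∈ ({a, b} : Set ℝ)) (hr : r ∈ ({a, b} : Set ℝ)) : p = q ∨ p = r ∨ q = r := by
  rcases hp with rfl | rfl <;> rcases hq with rfl | rfl <;> rcases hr with rfl | rfl <;> simp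

lemma exists_forall_ne_eq_of_pairwise_add_mem_pair {ι : Type*} [Nonempty ι] {y : ι → ℝ}
    {a b : ℝ} (h : Pairwise fun i j => y i + y j ∈ ({a, b} : Set ℝ)) :
    ∃ q u, ∀ i ≠ q, y i = u := by
  by_cases hconst : ∀ i j, y i = y j
  · obtain ⟨q⟩ := ‹Nonempty ι›
    exact ⟨q, y q, fun i _ => hconst i q⟩
  push Not at hconst
  obtain ⟨i, j, hij⟩ := hconst
  have hne : i ≠ j := fun h => hij (congrArg y h)
  have htwo : ∀ k, y k = y i ∨ y k = y j := by
    intro k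
    by_cases hki : k = i; · exact Or.inl (congrArg y hki)
    by_cases hkj : k = j; · exact Or.inr (congrArg y hkj)
    rcases eq_or_eq_or_eq_of_mem_pair (h hne) (h (Ne.symm hki)) (h (Ne.symm hkj)) with e | e | e
    · exact Or.inr (by linarith)
    · exact Or.inl (by linarith)
    · exact absurd (by linarith) hij
  by_cases hrep : ∃ k ≠ i, y k = y i
  · obtain ⟨k, hki, hk⟩ := hrep
    refine ⟨j, y i, fun l hlj => (htwo l).resolve_right fun hl => ?_⟩
    rcases eq_or_eq_or_eq_of_mem_pair (h hki) (h hne) (h hlj) with e | e | e <;>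
      exact hij (by linarith)
  · push Not at hrep
    exact ⟨i, y j, fun k hki => (htwo k).resolve_left (hrep k hki)⟩

section distSet

variable {n : ℕ} {S T : Set (EuclideanSpace ℝ (Fin n))}

lemma distSet_mono (h : S ⊆ T) : distSet S ⊆ distSet T := by
  rintro d ⟨x, hx, y, hy, hxy, rfl⟩
  exact ⟨x, h hx, y, h hy, hxy, rfl⟩

lemma dist_mem_distSet {x y : EuclideanSpace ℝ (Fin n)} (hx : x ∈ S) (hy : y ∈ S) (hxy : x ≠ y) :
    dist x y ∈ distSet S :=
  ⟨x, hx, y, hy, hxy, rfl⟩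

lemma distSet_eq_of_subset_of_isSDistanceSet {D : Set ℝ} {s : ℕ} (hD : D ⊆ distSet S)
    (hcard : D.ncard = s) (hS : IsSDistanceSet s S) : distSet S = D :=
  (Set.eq_of_subset_of_ncard_le hD (hcard ▸ hS.2.le) hS.1).symm

end distSet

lemma sqrt_two_ne_two : √2 ≠ 2 := by
  intro h
  have := Real.sq_sqrt (zero_le_two (α := ℝ))
  rw [h] at this
  norm_num at this

lemma ncard_sqrt_two_two : ({√2, 2} : Set ℝ).ncard = 2 := Set.ncard_pair sqrt_two_ne_two

lemma mem_sqrt_two_two_iff_sq {r : ℝ} (hr : 0 ≤ r) :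
    r ∈ ({√2, 2} : Set ℝ) ↔ r ^ 2 = 2 ∨ r ^ 2 = 4 := by
  have h2 : r = √2 ↔ r ^ 2 = 2 := by
    rw [← Real.sqrt_inj (sq_nonneg r) zero_le_two, Real.sqrt_sq hr]
  have h4 : r = 2 ↔ r ^ 2 = 4 := by
    rw [show (4 : ℝ) = 2 ^ 2 by norm_num, pow_left_inj₀ hr zero_le_two two_ne_zero]
  rw [Set.mem_insert_iff, Set.mem_singleton_iff, h2, h4]

def indicatorVec {n : ℕ} (s : Finset (Fin n)) : EuclideanSpace ℝ (Fin n) :=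
  WithLp.toLp 2 fun k => if k ∈ s then 1 else 0

@[simp]
lemma indicatorVec_apply {n : ℕ} (s : Finset (Fin n)) (k : Fin n) :
    indicatorVec s k = if k ∈ s then 1 else 0 := rfl

lemma indicatorVec_injective (n : ℕ) : Function.Injective (indicatorVec (n := n)) := by
  intro s t h
  ext k
  have := congr($h k)
  simp only [indicatorVec_apply] at this
  split_ifs at this <;> simp_all

lemma inner_indicatorVec {n : ℕ} (s : Finset (Fin n)) (y : EuclideanSpace ℝ (Fin n)) :
    inner ℝ (indicatorVec s) y = ∑ k ∈ s, y k := by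
  simp [PiLp.inner_apply, Finset.sum_ite_mem]

lemma norm_sq_indicatorVec {n : ℕ} (s : Finset (Fin n)) : ‖indicatorVec s‖ ^ 2 = #s := by
  simp [EuclideanSpace.real_norm_sq_eq, Finset.sum_ite_mem]

lemma dist_indicatorVec_sq {n : ℕ} (s : Finset (Fin n)) (y : EuclideanSpace ℝ (Fin n)) :
    dist (indicatorVec s) y ^ 2 = #s - 2 * ∑ k ∈ s, y k + ∑ k, y k ^ 2 := by
  rw [dist_eq_norm, norm_sub_sq_real, norm_sq_indicatorVec, inner_indicatorVec,
    EuclideanSpace.real_norm_sq_eq]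

lemma dist_indicatorVec_indicatorVec_sq {n : ℕ} (s t : Finset (Fin n)) :
    dist (indicatorVec s) (indicatorVec t) ^ 2 = #s + #t - 2 * #(s ∩ t) := by
  rw [dist_eq_norm, norm_sub_sq_real, norm_sq_indicatorVec, norm_sq_indicatorVec,
    inner_indicatorVec]
  simp only [indicatorVec_apply, Finset.sum_boole, Finset.filter_mem_eq_inter]
  ring

lemma johnsonRep_eq_image (n m : ℕ) :
    JohnsonRep n m = indicatorVec '' {s | #s = m} := by
  ext x
  constructor
  · rintro ⟨h01, hcard⟩
    refine ⟨(Set.toFinite {i | x i = 1}).toFinset, ?_, ?_⟩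
    · exact (Set.ncard_eq_toFinset_card _ _).symm.trans hcard
    · ext k
      rcases h01 k with h | h <;> simp [h]
  · rintro ⟨s, hs, rfl⟩
    refine ⟨fun i => by by_cases h : i ∈ s <;> simp [h], ?_⟩
    have : {i | indicatorVec s i = 1} = ↑s := by ext i; simp
    rw [this, Set.ncard_coe_finset, hs]

lemma indicatorVec_mem_johnsonRep {n : ℕ} {s : Finset (Fin n)} :
    indicatorVec s ∈ JohnsonRep n #s := by
  rw [johnsonRep_eq_image]
  exact ⟨s, rfl, rfl⟩

lemma ncard_johnsonRep (n m : ℕ) : (JohnsonRep n m).ncard = n.choose m := by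
  rw [johnsonRep_eq_image, Set.ncard_image_of_injective _ (indicatorVec_injective n)]
  have : {s : Finset (Fin n) | #s = m} = ↑(powersetCard m (univ : Finset (Fin n))) := by
    ext s; simp
  rw [this, Set.ncard_coe_finset, card_powersetCard, card_univ, Fintype.card_fin]

lemma finite_johnsonRep (n m : ℕ) : (JohnsonRep n m).Finite :=
  johnsonRep_eq_image n m ▸ (Set.toFinite _).image _

lemma johnsonRep_subset_hyp (n m : ℕ) : JohnsonRep n m ⊆ Hyp n m := by
  rw [johnsonRep_eq_image]
  rintro _ ⟨s, rfl, rfl⟩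
  simp [Hyp]

def xVec (p : Fin 9) : EuclideanSpace ℝ (Fin 9) :=
  WithLp.toLp 2 fun k => if k = p then -2/3 else 1/3

@[simp]
lemma xVec_apply (p k : Fin 9) : xVec p k = if k = p then -2/3 else 1/3 := rfl

lemma xVec_apply_of_ne {p k : Fin 9} (h : k ≠ p) : xVec p k = 1/3 := if_neg h

lemma xVec_injective : Function.Injective xVec := by
  intro p q h
  by_contra hpq
  have := congr($h p)
  simp [hpq] at this
  norm_num at this

lemma x92_eq_range : X92 = Set.range xVec := by
  ext y
  constructor
  · rintro ⟨h8, h1⟩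
    obtain ⟨p, hp⟩ := Set.ncard_eq_one.mp h1
    have hyp : y p = -2/3 := (Set.ext_iff.mp hp p).mpr rfl
    have hthird : {i | y i = 1/3} = {p}ᶜ := by
      refine Set.eq_of_subset_of_ncard_le (fun i (hi : y i = 1/3) (hip : i = p) => ?_) ?_
      · have := hyp.symm.trans (hip ▸ hi)
        norm_num at this
      · rw [h8, Set.ncard_compl, Set.ncard_singleton, Nat.card_eq_fintype_card, Fintype.card_fin]
    refine ⟨p, ?_⟩
    ext i
    by_cases hi : i = p
    · simp [hi, hyp]
    · simp only [xVec_apply, if_neg hi]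
      exact ((Set.ext_iff.mp hthird i).mpr hi).symm
  · rintro ⟨p, rfl⟩
    have h8 : {i | xVec p i = 1/3} = {p}ᶜ := by ext i; by_cases hi : i = p <;> norm_num [hi]
    have h1 : {i | xVec p i = -2/3} = {p} := by ext i; by_cases hi : i = p <;> norm_num [hi]
    refine ⟨?_, ?_⟩
    · rw [h8, Set.ncard_compl, Set.ncard_singleton, Nat.card_eq_fintype_card, Fintype.card_fin]
    · rw [h1, Set.ncard_singleton]

lemma sum_xVec (p : Fin 9) : ∑ k, xVec p k = 2 := by
  rw [sum_eq_add_mul_of_forall_ne _ fun k => xVec_apply_of_ne]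
  norm_num

lemma sum_sq_xVec (p : Fin 9) : ∑ k, xVec p k ^ 2 = 4/3 := by
  rw [sum_eq_add_mul_of_forall_ne (fun k => xVec p k ^ 2) fun k hk => by rw [xVec_apply_of_ne hk]]
  norm_num

lemma x92_subset_hyp : X92 ⊆ Hyp 9 2 := by
  rw [x92_eq_range]
  rintro _ ⟨p, rfl⟩
  show ∑ k, xVec p k = ((2 : ℕ) : ℝ)
  rw [sum_xVec, Nat.cast_ofNat]

lemma dist_indicatorVec_indicatorVec_mem {n : ℕ} {s t : Finset (Fin n)} (hs : #s = 2)
    (ht : #t = 2) (hst : s ≠ t) :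
    dist (indicatorVec s) (indicatorVec t) ∈ ({√2, 2} : Set ℝ) := by
  rw [mem_sqrt_two_two_iff_sq dist_nonneg, dist_indicatorVec_indicatorVec_sq, hs, ht]
  have hlt : #(s ∩ t) < 2 := by
    refine hs ▸ card_lt_card (ssubset_of_subset_of_ne inter_subset_left fun h => hst ?_)
    exact eq_of_subset_of_card_le (h ▸ inter_subset_right) (by rw [hs, ht])
  interval_cases #(s ∩ t) <;> norm_num

lemma dist_indicatorVec_xVec_mem {s : Finset (Fin 9)} (hs : #s = 2) (p : Fin 9) :
    dist (indicatorVec s) (xVec p) ∈ ({√2, 2} : Set ℝ) := by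
  have hsum : ∑ k ∈ s, xVec p k = 2/3 - if p ∈ s then 1 else 0 := by
    have hx : ∀ k, xVec p k = 1/3 - if k = p then 1 else 0 := fun k => by
      rw [xVec_apply]
      split_ifs <;> norm_num
    simp only [hx, sum_sub_distrib, sum_const, hs, sum_ite_eq']
    norm_num
  rw [mem_sqrt_two_two_iff_sq dist_nonneg, dist_indicatorVec_sq, hsum, sum_sq_xVec, hs]
  split_ifs <;> norm_num

lemma xVec_sub_xVec (p q : Fin 9) : xVec p - xVec q = indicatorVec {q} - indicatorVec {p} := by
  ext k
  simp only [PiLp.sub_apply, xVec_apply, indicatorVec_apply, mem_singleton]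
  split_ifs <;> norm_num

lemma dist_xVec_xVec {p q : Fin 9} (hpq : p ≠ q) : dist (xVec p) (xVec q) = √2 := by
  rw [dist_eq_norm, xVec_sub_xVec, ← dist_eq_norm, ← Real.sqrt_sq dist_nonneg,
    dist_indicatorVec_indicatorVec_sq, singleton_inter_of_notMem (by simpa using hpq.symm)]
  norm_num

lemma johnsonRep_union_x92_eq :
    JohnsonRep 9 2 ∪ X92 = indicatorVec '' {s | #s = 2} ∪ Set.range xVec := by
  rw [johnsonRep_eq_image, x92_eq_range]

lemma dist_mem_of_mem_johnsonRep_union_x92 {x y : EuclideanSpace ℝ (Fin 9)}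
    (hx : x ∈ JohnsonRep 9 2 ∪ X92) (hy : y ∈ JohnsonRep 9 2 ∪ X92) (hxy : x ≠ y) :
    dist x y ∈ ({√2, 2} : Set ℝ) := by
  rw [johnsonRep_union_x92_eq] at hx hy
  rcases hx with ⟨s, hs, rfl⟩ | ⟨p, rfl⟩ <;> rcases hy with ⟨t, ht, rfl⟩ | ⟨q, rfl⟩
  · exact dist_indicatorVec_indicatorVec_mem hs ht (ne_of_apply_ne _ hxy)
  · exact dist_indicatorVec_xVec_mem hs q
  · rw [dist_comm]
    exact dist_indicatorVec_xVec_mem ht p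
  · exact Or.inl (dist_xVec_xVec (ne_of_apply_ne _ hxy))

lemma disjoint_johnsonRep_x92 : Disjoint (JohnsonRep 9 2) X92 := by
  rw [johnsonRep_eq_image, x92_eq_range, Set.disjoint_left]
  rintro _ ⟨s, -, rfl⟩ ⟨p, hp⟩
  have := congr($hp p)
  simp only [xVec_apply, indicatorVec_apply] at this
  split_ifs at this <;> norm_num at this

lemma ncard_johnsonRep_union_x92 : (JohnsonRep 9 2 ∪ X92).ncard = 45 := by
  have hX : X92.Finite := x92_eq_range ▸ Set.finite_range xVec
  rw [Set.ncard_union_eq disjoint_johnsonRep_x92 (finite_johnsonRep 9 2) hX, ncard_johnsonRep,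
    x92_eq_range, ← Set.image_univ, Set.ncard_image_of_injective _ xVec_injective, Set.ncard_univ,
    Nat.card_eq_fintype_card, Fintype.card_fin]
  rfl

lemma sqrt_two_two_subset_distSet_johnsonRep :
    ({√2, 2} : Set ℝ) ⊆ distSet (JohnsonRep 9 2) := by
  have hwit : ∀ s t : Finset (Fin 9), #s = 2 → #t = 2 → s ≠ t →
      √(4 - 2 * #(s ∩ t)) ∈ distSet (JohnsonRep 9 2) := fun s t hs ht hst => by
    have := dist_mem_distSet (hs ▸ indicatorVec_mem_johnsonRep) (ht ▸ indicatorVec_mem_johnsonRep)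
      ((indicatorVec_injective 9).ne hst)
    rw [← Real.sqrt_sq dist_nonneg, dist_indicatorVec_indicatorVec_sq, hs, ht] at this
    norm_num at this
    exact this
  rintro d (rfl | rfl)
  · have := hwit {0, 1} {0, 2} (by decide) (by decide) (by decide)
    rwa [show #(({0, 1} : Finset (Fin 9)) ∩ {0, 2}) = 1 by decide, Nat.cast_one,
      show (4 : ℝ) - 2 * 1 = 2 by norm_num] at this
  · have := hwit {0, 1} {2, 3} (by decide) (by decide) (by decide)
    rwa [show #(({0, 1} : Finset (Fin 9)) ∩ {2, 3}) = 0 by decide, Nat.cast_zero,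
      show (4 : ℝ) - 2 * 0 = 2 ^ 2 by norm_num, Real.sqrt_sq zero_le_two] at this

lemma eq_one_third_of_add_mem_pair {u v : ℝ} (hsum : v + 8 * u = 2)
    (huu : 2 * u ∈ ({(v ^ 2 + 8 * u ^ 2) / 2, (v ^ 2 + 8 * u ^ 2) / 2 - 1} : Set ℝ))
    (huv : u + v ∈ ({(v ^ 2 + 8 * u ^ 2) / 2, (v ^ 2 + 8 * u ^ 2) / 2 - 1} : Set ℝ)) :
    u = 1/3 ∧ v = -2/3 := by
  simp only [Set.mem_insert_iff, Set.mem_singleton_iff] at huu huv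
  obtain rfl : v = 2 - 8 * u := by linarith
  rcases huu with huu | huu <;> rcases huv with huv | huv
  · nlinarith
  · constructor <;> linarith
  · nlinarith
  · nlinarith

lemma eq_xVec_of_pairwise_add_mem_pair {y : EuclideanSpace ℝ (Fin 9)} (hy : ∑ k, y k = 2)
    (h : Pairwise fun i j => y i + y j ∈
      ({(∑ k, y k ^ 2) / 2, (∑ k, y k ^ 2) / 2 - 1} : Set ℝ))
    {q : Fin 9} {u : ℝ} (hu : ∀ i ≠ q, y i = u) : y = xVec q := by
  obtain ⟨j, hj, l, hl, hjl⟩ := one_lt_card.mp (by simp : 1 < #(univ.erase q))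
  have hjq := ne_of_mem_erase hj
  have hsum : y q + 8 * u = 2 := by
    rw [← hy, sum_eq_add_mul_of_forall_ne _ hu]
    norm_num
  have hsq : ∑ k, y k ^ 2 = y q ^ 2 + 8 * u ^ 2 := by
    rw [sum_eq_add_mul_of_forall_ne (fun k => y k ^ 2) fun k hk => by rw [hu k hk]]
    norm_num
  have huu := h hjl
  have huv := h hjq
  rw [hsq, hu j hjq, hu l (ne_of_mem_erase hl), ← two_mul] at huu
  rw [hsq, hu j hjq] at huv
  obtain ⟨rfl, hq⟩ := eq_one_third_of_add_mem_pair hsum huu huv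
  ext k
  by_cases hk : k = q
  · rw [hk, hq, xVec_apply, if_pos rfl]
  · rw [hu k hk, xVec_apply_of_ne hk]

lemma mem_johnsonRep_union_x92_of_forall_dist_mem {y : EuclideanSpace ℝ (Fin 9)}
    (hy : y ∈ Hyp 9 2)
    (h : ∀ x ∈ JohnsonRep 9 2, x ≠ y → dist x y ∈ ({√2, 2} : Set ℝ)) :
    y ∈ JohnsonRep 9 2 ∪ X92 := by
  by_cases hJ : y ∈ JohnsonRep 9 2
  · exact Or.inl hJ
  have hpair : Pairwise fun i j => y i + y j ∈
      ({(∑ k, y k ^ 2) / 2, (∑ k, y k ^ 2) / 2 - 1} : Set ℝ) := by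
    intro i j hij
    have hx : indicatorVec {i, j} ∈ JohnsonRep 9 2 := card_pair hij ▸ indicatorVec_mem_johnsonRep
    have hd := (mem_sqrt_two_two_iff_sq dist_nonneg).mp (h _ hx (ne_of_mem_of_not_mem hx hJ))
    rw [dist_indicatorVec_sq, card_pair hij, Nat.cast_ofNat, sum_pair hij] at hd
    rcases hd with hd | hd
    · exact Or.inl (by linarith)
    · exact Or.inr (Set.mem_singleton_iff.mpr (by linarith))
  have hsum : ∑ k, y k = 2 := by
    rw [hy]
    norm_num
  obtain ⟨q, u, hu⟩ := exists_forall_ne_eq_of_pairwise_add_mem_pair hpair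
  exact Or.inr (x92_eq_range ▸ ⟨q, (eq_xVec_of_pairwise_add_mem_pair hsum hpair hu).symm⟩)

section

variable {S : Set (EuclideanSpace ℝ (Fin 9))}

lemma distSet_eq_of_johnsonRep_subset_of_subset (hJ : JohnsonRep 9 2 ⊆ S)
    (hS : S ⊆ JohnsonRep 9 2 ∪ X92) : distSet S = {√2, 2} := by
  refine subset_antisymm ?_ (sqrt_two_two_subset_distSet_johnsonRep.trans (distSet_mono hJ))
  rintro d ⟨x, hx, y, hy, hxy, rfl⟩
  exact dist_mem_of_mem_johnsonRep_union_x92 (hS hx) (hS hy) hxy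

lemma isSDistanceSet_of_johnsonRep_subset_of_subset (hJ : JohnsonRep 9 2 ⊆ S)
    (hS : S ⊆ JohnsonRep 9 2 ∪ X92) : IsSDistanceSet 2 S := by
  rw [IsSDistanceSet, distSet_eq_of_johnsonRep_subset_of_subset hJ hS]
  exact ⟨Set.toFinite _, ncard_sqrt_two_two⟩

lemma subset_johnsonRep_union_x92 (hJ : JohnsonRep 9 2 ⊆ S) (hH : S ⊆ Hyp 9 2)
    (hS : IsSDistanceSet 2 S) : S ⊆ JohnsonRep 9 2 ∪ X92 := by
  have hD := distSet_eq_of_subset_of_isSDistanceSet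
    (sqrt_two_two_subset_distSet_johnsonRep.trans (distSet_mono hJ)) ncard_sqrt_two_two hS
  intro y hy
  refine mem_johnsonRep_union_x92_of_forall_dist_mem (hH hy) fun x hx hxy => ?_
  exact hD ▸ dist_mem_distSet (hJ hx) hy hxy

end

theorem maximal_two_distance_J92 :
    (JohnsonRep 9 2 ∪ X92) ⊆ Hyp 9 2 ∧
    (JohnsonRep 9 2 ∪ X92).ncard = 45 ∧
    IsSDistanceSet 2 (JohnsonRep 9 2 ∪ X92) ∧
    distSet (JohnsonRep 9 2 ∪ X92) = {Real.sqrt 2, 2} ∧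
    (∀ y ∈ Hyp 9 2, IsSDistanceSet 2 (JohnsonRep 9 2 ∪ {y}) →
      y ∈ JohnsonRep 9 2 ∪ X92) ∧
    (∀ T : Set (EuclideanSpace ℝ (Fin 9)), JohnsonRep 9 2 ⊆ T → T ⊆ Hyp 9 2 →
      IsSDistanceSet 2 T →
      (¬∃ y ∈ Hyp 9 2 \ T, IsSDistanceSet 2 (T ∪ {y})) →
      T = JohnsonRep 9 2 ∪ X92) := by
  have hH : JohnsonRep 9 2 ∪ X92 ⊆ Hyp 9 2 :=
    Set.union_subset (johnsonRep_subset_hyp 9 2) x92_subset_hyp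
  refine ⟨hH, ncard_johnsonRep_union_x92,
    isSDistanceSet_of_johnsonRep_subset_of_subset Set.subset_union_left subset_rfl,
    distSet_eq_of_johnsonRep_subset_of_subset Set.subset_union_left subset_rfl, ?_, ?_⟩
  · intro y hy hS
    have hH' := Set.union_subset (johnsonRep_subset_hyp 9 2) (Set.singleton_subset_iff.mpr hy)
    exact subset_johnsonRep_union_x92 Set.subset_union_left hH' hS (Or.inr rfl)
  · intro T hJ hTH hS hmax
    have hT := subset_johnsonRep_union_x92 hJ hTH hS
    refine subset_antisymm hT (Set.union_subset hJ fun z hz => ?_)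
    by_contra hzT
    have hTz : T ∪ {z} ⊆ JohnsonRep 9 2 ∪ X92 :=
      Set.union_subset hT (Set.singleton_subset_iff.mpr (Or.inr hz))
    exact hmax ⟨z, ⟨hH (Or.inr hz), hzT⟩,
      isSDistanceSet_of_johnsonRep_subset_of_subset (hJ.trans Set.subset_union_left) hTz⟩
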